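/- Fix D₃₃ > 0, D₄₄ > 0 and t > 0, and define p(y, β, γ) := (4π t² D₃₃ D₄₄)⁻² · exp(−M(c⁽¹⁾(y,β,γ), c⁽²⁾(β,γ))² / (4t)) for y ∈ ℝ³, β ∈ (−π,π)\{0}, γ ∈ ℝ. Then, with R := R_z(γ) R_y(β) R_z(−γ): p(−Rᵀ y, −β, γ) = p(y, β, γ). (Since Rᵀ = R_z(γ) R_y(−β) R_z(−γ) and Rᵀ e_z = n(−β, γ), this is exactly the symmetry property p_t^new(y, n) = p_t^new(−R_nᵀ y, R_nᵀ e_z) of Theorem 1.) -/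

import Mathlib

open Matrix

/-- The skew-symmetric matrix associated to a vector `c ∈ ℝ³`. -/
def skew (c : Fin 3 → ℝ) : Matrix (Fin 3) (Fin 3) ℝ :=
  !![0, -c 2, c 1; c 2, 0, -c 0; -c 1, c 0, 0]

/-- The Euclidean norm of a vector in `ℝ³`. -/
noncomputable def enorm3 (c : Fin 3 → ℝ) : ℝ :=
  Real.sqrt (c 0 ^ 2 + c 1 ^ 2 + c 2 ^ 2)

/-- Equation (11) of the paper: the spatial coefficients of the logarithm on `SE(3)`. -/
noncomputable def F (c x : Fin 3 → ℝ) : Fin 3 → ℝ :=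
  ((1 : Matrix (Fin 3) (Fin 3) ℝ) - (1 / 2 : ℝ) • skew c +
      ((enorm3 c)⁻¹ ^ 2 *
        (1 - enorm3 c / 2 * (Real.cos (enorm3 c / 2) / Real.sin (enorm3 c / 2)))) •
        (skew c * skew c)).mulVec x

/-- Counter-clockwise rotation about the `z`-axis by angle `θ`. -/
noncomputable def Rz (θ : ℝ) : Matrix (Fin 3) (Fin 3) ℝ :=
  !![Real.cos θ, -Real.sin θ, 0; Real.sin θ, Real.cos θ, 0; 0, 0, 1]

/-- The rotational logarithm coefficients `c⁽²⁾(β,γ) = β · R_z(γ) e_y` of the rotation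
`R_z(γ) R_y(β) R_z(−γ)` (section `α = −γ`). -/
noncomputable def c2 (β γ : ℝ) : Fin 3 → ℝ :=
  β • (Rz γ).mulVec ![0, 1, 0]

/-- The spatial logarithm coefficients `c⁽¹⁾(y,β,γ) = F(c⁽²⁾(β,γ), y)`. -/
noncomputable def c1 (y : Fin 3 → ℝ) (β γ : ℝ) : Fin 3 → ℝ :=
  F (c2 β γ) y


/-- The smoothed weighted modulus of the paper, on a coefficient vector
`c = (c¹,…,c⁶) = (a, b) ∈ ℝ³ × ℝ³ ≅ ℝ⁶`. -/
noncomputable def weightedModulus (D33 D44 : ℝ) (a b : Fin 3 → ℝ) : ℝ :=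
  ((a 0 ^ 2 + a 1 ^ 2) / (D33 * D44) + b 2 ^ 2 / D44 +
      (a 2 ^ 2 / D33 + (b 0 ^ 2 + b 1 ^ 2) / D44) ^ 2) ^ ((1 : ℝ) / 4)

/-- The new kernel approximation `p_t^new` of the paper, in the coordinates
`(y, β, γ)` of the section `α = −γ`:
`p(y,β,γ) = (4πt²D₃₃D₄₄)⁻² exp(−M(c⁽¹⁾(y,β,γ), c⁽²⁾(β,γ))²/(4t))`. -/
noncomputable def pNew (D33 D44 t : ℝ) (y : Fin 3 → ℝ) (β γ : ℝ) : ℝ :=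
  ((4 * Real.pi * t ^ 2 * D33 * D44) ^ 2)⁻¹ *
    Real.exp (-(weightedModulus D33 D44 (c1 y β γ) (c2 β γ)) ^ 2 / (4 * t))

/-- Counter-clockwise rotation about the `y`-axis by angle `θ`. -/
noncomputable def Ry (θ : ℝ) : Matrix (Fin 3) (Fin 3) ℝ :=
  !![Real.cos θ, 0, Real.sin θ; 0, 1, 0; -Real.sin θ, 0, Real.cos θ]

/-! With `K` the skew matrix of the unit axis `u = R_z(γ) e_y`, we have `c⁽²⁾(β, γ) = β u`,
the rotation `R` is `exp (β K) = 1 + sin β K + (1 - cos β) K²` (Rodrigues), and `F(β u, ·)` is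
multiplication by the inverse Jacobian `G(β) = 1 - (β/2) K + (1 - (β/2) cot (β/2)) K²` of the
logarithm of `SO(3)`. Because `K³ = -K`, products of such matrices are computed on the
coefficients of `1, K, K²`, and the half-angle formulas give `G(-β) Rᵀ = G(β)`. Hence
`c⁽¹⁾(-Rᵀ y, -β, γ) = -c⁽¹⁾(y, β, γ)`, while `c⁽²⁾(-β, γ) = -c⁽²⁾(β, γ)` and `M` is even. -/

open Real

theorem mul_eq_of_pow_three_eq_neg {A : Type*} [Ring A] [Algebra ℝ A] {K : A}
    (hK : K ^ 3 = -K) (a b c d : ℝ) :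
    (1 + a • K + b • K ^ 2) * (1 + c • K + d • K ^ 2) =
      1 + (a + c - (a * d + b * c)) • K + (b + d + a * c - b * d) • K ^ 2 := by
  have h11 : K * K = K ^ 2 := (sq K).symm
  have h12 : K * K ^ 2 = -K := by rw [← pow_succ', hK]
  have h21 : K ^ 2 * K = -K := by rw [← pow_succ, hK]
  have h22 : K ^ 2 * K ^ 2 = -K ^ 2 := by rw [← pow_add, pow_succ, hK, neg_mul, sq]
  simp only [add_mul, mul_add, one_mul, mul_one, smul_mul_assoc, mul_smul_comm,
    h11, h12, h21, h22]
  module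

noncomputable def logJacCoeff (θ : ℝ) : ℝ := 1 - θ / 2 * (cos (θ / 2) / sin (θ / 2))

theorem logJacCoeff_neg (θ : ℝ) : logJacCoeff (-θ) = logJacCoeff θ := by
  simp only [logJacCoeff, neg_div, cos_neg, sin_neg, div_neg, neg_mul_neg]

theorem logJacCoeff_abs (θ : ℝ) : logJacCoeff |θ| = logJacCoeff θ := by
  rcases abs_choice θ with h | h <;> simp only [h, logJacCoeff_neg]

theorem logJac_neg_mul_rot_neg {A : Type*} [Ring A] [Algebra ℝ A] {K : A} (hK : K ^ 3 = -K)
    {θ : ℝ} (hθ : sin (θ / 2) ≠ 0) :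
    (1 + (θ / 2) • K + logJacCoeff θ • K ^ 2) * (1 + (-sin θ) • K + (1 - cos θ) • K ^ 2) =
      1 + (-(θ / 2)) • K + logJacCoeff θ • K ^ 2 := by
  have hsin : sin θ = 2 * sin (θ / 2) * cos (θ / 2) := by
    rw [← sin_two_mul, mul_div_cancel₀ θ two_ne_zero]
  have hcos : cos θ = cos (θ / 2) ^ 2 - sin (θ / 2) ^ 2 := by
    rw [← cos_two_mul', mul_div_cancel₀ θ two_ne_zero]
  have hK1 : θ / 2 + -sin θ - (θ / 2 * (1 - cos θ) + logJacCoeff θ * -sin θ) = -(θ / 2) := by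
    rw [logJacCoeff, hsin, hcos]; field_simp
    linear_combination (-θ) * sin_sq_add_cos_sq (θ / 2)
  have hK2 : logJacCoeff θ + (1 - cos θ) + θ / 2 * -sin θ - logJacCoeff θ * (1 - cos θ) =
      logJacCoeff θ := by
    rw [logJacCoeff, hsin, hcos]; field_simp
    linear_combination (-θ * cos (θ / 2)) * sin_sq_add_cos_sq (θ / 2)
  rw [mul_eq_of_pow_three_eq_neg hK, hK1, hK2]

theorem skew_smul (r : ℝ) (c : Fin 3 → ℝ) : skew (r • c) = r • skew c := by
  ext i j; fin_cases i <;> fin_cases j <;> simp [skew]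

theorem skew_transpose (c : Fin 3 → ℝ) : (skew c)ᵀ = -skew c := by
  ext i j; fin_cases i <;> fin_cases j <;> simp [skew]

theorem skew_pow_three (c : Fin 3 → ℝ) : skew c ^ 3 = -(enorm3 c ^ 2) • skew c := by
  rw [enorm3, sq_sqrt (by positivity)]
  ext i j; fin_cases i <;> fin_cases j <;>
    simp [skew, pow_succ, Matrix.mul_apply, Fin.sum_univ_three] <;> ring

theorem enorm3_smul (r : ℝ) (c : Fin 3 → ℝ) : enorm3 (r • c) = |r| * enorm3 c := by
  simp only [enorm3, Pi.smul_apply, smul_eq_mul, mul_pow, ← mul_add]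
  rw [sqrt_mul (sq_nonneg r), sqrt_sq_eq_abs]

theorem F_smul {u : Fin 3 → ℝ} (hu : enorm3 u = 1) {θ : ℝ} (hθ : θ ≠ 0) (x : Fin 3 → ℝ) :
    F (θ • u) x = (1 + (-(θ / 2)) • skew u + logJacCoeff θ • skew u ^ 2) *ᵥ x := by
  have hcoeff : ((enorm3 (θ • u))⁻¹ ^ 2 * logJacCoeff (enorm3 (θ • u))) * θ ^ 2 =
      logJacCoeff θ := by
    rw [enorm3_smul, hu, mul_one, logJacCoeff_abs, inv_pow, sq_abs]; field_simp
  rw [F, ← logJacCoeff, skew_smul, smul_mul_smul_comm, ← sq (skew u), ← sq θ,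
    smul_smul _ (θ ^ 2), hcoeff]
  congr 2
  module

theorem Rz_mulVec_ey (γ : ℝ) : Rz γ *ᵥ ![0, 1, 0] = ![-sin γ, cos γ, 0] := by
  ext i; fin_cases i <;> simp [Rz, Matrix.mulVec, dotProduct, Fin.sum_univ_three]

theorem enorm3_Rz_mulVec_ey (γ : ℝ) : enorm3 (Rz γ *ᵥ ![0, 1, 0]) = 1 := by
  simp [Rz_mulVec_ey, enorm3]

theorem Rz_mul_Ry_mul_Rz_neg (β γ : ℝ) :
    Rz γ * Ry β * Rz (-γ) =
      1 + sin β • skew (Rz γ *ᵥ ![0, 1, 0]) + (1 - cos β) • skew (Rz γ *ᵥ ![0, 1, 0]) ^ 2 := by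
  rw [Rz_mulVec_ey]
  ext i j; fin_cases i <;> fin_cases j <;>
    simp [Rz, Ry, skew, sq, Matrix.mul_apply, Fin.sum_univ_three] <;>
    first
      | ring1
      | linear_combination sin_sq_add_cos_sq γ
      | linear_combination (1 - cos β) * sin_sq_add_cos_sq γ

theorem weightedModulus_neg (D33 D44 : ℝ) (a b : Fin 3 → ℝ) :
    weightedModulus D33 D44 (-a) (-b) = weightedModulus D33 D44 a b := by
  simp only [weightedModulus, Pi.neg_apply, neg_sq]

theorem c1_neg_transpose_mulVec (y : Fin 3 → ℝ) {β : ℝ} (γ : ℝ) (hs : sin (β / 2) ≠ 0) :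
    c1 (-((Rz γ * Ry β * Rz (-γ))ᵀ *ᵥ y)) (-β) γ = -c1 y β γ := by
  have hβ0 : β ≠ 0 := by rintro rfl; simp at hs
  set K := skew (Rz γ *ᵥ ![0, 1, 0])
  have hK : K ^ 3 = -K := by rw [skew_pow_three, enorm3_Rz_mulVec_ey, one_pow, neg_one_smul]
  have hRT : (Rz γ * Ry β * Rz (-γ))ᵀ = 1 + (-sin β) • K + (1 - cos β) • K ^ 2 := by
    rw [Rz_mul_Ry_mul_Rz_neg, transpose_add, transpose_add, transpose_smul, transpose_smul,
      transpose_one, transpose_pow, skew_transpose, neg_sq, smul_neg, neg_smul]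
  rw [c1, c1, c2, c2, F_smul (enorm3_Rz_mulVec_ey γ) hβ0,
    F_smul (enorm3_Rz_mulVec_ey γ) (neg_ne_zero.2 hβ0), logJacCoeff_neg, mulVec_neg,
    mulVec_mulVec, hRT, neg_div, neg_neg, logJac_neg_mul_rot_neg hK hs]

theorem pNew_symmetry_general (D33 D44 t : ℝ) (y : Fin 3 → ℝ) (β γ : ℝ)
    (hβ : β ∈ Set.Ioo (-Real.pi) Real.pi) (hβ0 : β ≠ 0) :
    pNew D33 D44 t (-(Rz γ * Ry β * Rz (-γ))ᵀ.mulVec y) (-β) γ =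
      pNew D33 D44 t y β γ := by
  have hs : sin (β / 2) ≠ 0 := by
    rw [Ne, sin_eq_zero_iff_of_lt_of_lt (by linarith [hβ.1, pi_pos])
      (by linarith [hβ.2, pi_pos])]
    exact div_ne_zero hβ0 two_ne_zero
  rw [pNew, pNew, c1_neg_transpose_mulVec y γ hs, c2, neg_smul, weightedModulus_neg, ← c2]

/-- Second assertion (equation (13)) of Theorem 1 of the paper: with
`R = R_z(γ) R_y(β) R_z(−γ)`, the new kernel satisfies the symmetry
`p(−Rᵀ y, −β, γ) = p(y, β, γ)` (i.e. `p_t^new(y,n) = p_t^new(−R_nᵀ y, R_nᵀ e_z)`). -/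
theorem pNew_symmetry (D33 D44 t : ℝ) (hD33 : 0 < D33) (hD44 : 0 < D44)
    (ht : 0 < t) (y : Fin 3 → ℝ) (β γ : ℝ) (hβ : β ∈ Set.Ioo (-Real.pi) Real.pi)
    (hβ0 : β ≠ 0) :
    pNew D33 D44 t (-(Rz γ * Ry β * Rz (-γ))ᵀ.mulVec y) (-β) γ =
      pNew D33 D44 t y β γ :=
  pNew_symmetry_general D33 D44 t y β γ hβ hβ0
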